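/- arXiv:2112.14904 — 3 statements merged into one kernel-verified Lean document; each statement's English description precedes it below -/
import Mathlib

section
/- Let f : [0,1] → ℂ be continuously differentiable and let z ∈ ℂ with Re(z) > 0. Then β[(·−1/2) f′](z+1) = −β[f](z+1) + 2z·((1/4)·β[f](z) − β[f](z+1)), where (·−1/2) f′ denotes the function u ↦ (u−1/2) f′(u). -/
/-!
Integrate by parts against `g u = (u - 1/2) (u(1-u))^z`, which vanishes at `0` and `1` because
`Re z > 0`. Since `(u - 1/2)² = 1/4 - u(1-u)`, its derivative
`(u(1-u))^z - 2z (1/4 (u(1-u))^(z-1) - (u(1-u))^z)` is again a combination of Beta weights, so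
`∫ (u - 1/2) f' (u(1-u))^z = -∫ g' f` is the stated combination of `β[f](z)` and `β[f](z+1)`.
-/

open MeasureTheory Set

/-- The generalized Beta function `β[f](z) = ∫₀¹ f(u) (u(1−u))^{z−1} du`. -/
noncomputable def betaFn (f : ℝ → ℂ) (z : ℂ) : ℂ :=
  ∫ u in Ioo (0:ℝ) 1, f u * ((u * (1 - u) : ℝ) : ℂ) ^ (z - 1)

theorem betaFn_eq_intervalIntegral (f : ℝ → ℂ) (z : ℂ) :
    betaFn f z = ∫ u in (0:ℝ)..1, f u * ((u * (1 - u) : ℝ) : ℂ) ^ (z - 1) := by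
  rw [intervalIntegral.integral_of_le zero_le_one, integral_Ioc_eq_integral_Ioo, betaFn]

theorem intervalIntegrable_cpow_mul_one_sub {s : ℂ} (hs : 0 < s.re) :
    IntervalIntegrable (fun u : ℝ => ((u * (1 - u) : ℝ) : ℂ) ^ (s - 1)) volume 0 1 := by
  have hbeta := Complex.betaIntegral_convergent hs hs
  rw [intervalIntegrable_iff_integrableOn_Ioo_of_le zero_le_one] at hbeta ⊢
  refine hbeta.congr_fun (fun u hu => ?_) measurableSet_Ioo
  rw [Complex.ofReal_mul, Complex.mul_cpow_ofReal_nonneg hu.1.le (sub_nonneg.2 hu.2.le),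
    Complex.ofReal_sub, Complex.ofReal_one]

theorem ContinuousOn.intervalIntegrable_mul_cpow_mul_one_sub {f : ℝ → ℂ}
    (hf : ContinuousOn f (Icc 0 1)) {s : ℂ} (hs : 0 < s.re) :
    IntervalIntegrable (fun u : ℝ => f u * ((u * (1 - u) : ℝ) : ℂ) ^ (s - 1)) volume 0 1 :=
  (intervalIntegrable_cpow_mul_one_sub hs).continuousOn_mul (by rwa [uIcc_of_le zero_le_one])

theorem continuous_cpow_mul_one_sub {s : ℂ} (hs : 0 < s.re) :
    Continuous fun u : ℝ => ((u * (1 - u) : ℝ) : ℂ) ^ s :=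
  (Complex.continuous_ofReal_cpow_const hs).comp (by fun_prop)

theorem hasDerivAt_cpow_mul_one_sub {u : ℝ} (hu : u ∈ Ioo 0 1) (s : ℂ) :
    HasDerivAt (fun v : ℝ => ((v * (1 - v) : ℝ) : ℂ) ^ s)
      (s * ((u * (1 - u) : ℝ) : ℂ) ^ (s - 1) * ((1 - 2 * u : ℝ) : ℂ)) u := by
  have hpos : 0 < u * (1 - u) := mul_pos hu.1 (sub_pos.2 hu.2)
  have hw : HasDerivAt (fun v : ℝ => v * (1 - v)) (1 - 2 * u) u :=
    ((hasDerivAt_id' u).mul ((hasDerivAt_id' u).const_sub 1)).congr_deriv (by ring)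
  exact (Complex.hasStrictDerivAt_cpow_const
    (Complex.ofReal_mem_slitPlane.2 hpos)).hasDerivAt.comp u hw.ofReal_comp

theorem hasDerivAt_sub_half_mul_cpow_mul_one_sub {u : ℝ} (hu : u ∈ Ioo 0 1) (z : ℂ) :
    HasDerivAt (fun v : ℝ => ((v - 1/2 : ℝ) : ℂ) * ((v * (1 - v) : ℝ) : ℂ) ^ z)
      (((u * (1 - u) : ℝ) : ℂ) ^ z
        - 2 * z * (1/4 * ((u * (1 - u) : ℝ) : ℂ) ^ (z - 1) - ((u * (1 - u) : ℝ) : ℂ) ^ z)) u := by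
  have hw : ((u * (1 - u) : ℝ) : ℂ) ≠ 0 :=
    Complex.ofReal_ne_zero.2 (mul_pos hu.1 (sub_pos.2 hu.2)).ne'
  have hshift : ((u * (1 - u) : ℝ) : ℂ) ^ z
      = ((u * (1 - u) : ℝ) : ℂ) ^ (z - 1) * ((u * (1 - u) : ℝ) : ℂ) := by
    conv_lhs => rw [← sub_add_cancel z 1, Complex.cpow_add _ _ hw, Complex.cpow_one]
  have hlin : HasDerivAt (fun v : ℝ => ((v - 1/2 : ℝ) : ℂ)) 1 u := by
    simpa using ((hasDerivAt_id u).sub_const (1/2 : ℝ)).ofReal_comp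
  refine (hlin.mul (hasDerivAt_cpow_mul_one_sub hu z)).congr_deriv ?_
  rw [hshift]
  push_cast
  ring

theorem integral_deriv_sub_half_mul_cpow_mul_one_sub_mul {f : ℝ → ℂ}
    (hf : ContinuousOn f (Icc 0 1)) {z : ℂ} (hz : 0 < z.re) :
    ∫ u in (0:ℝ)..1, (((u * (1 - u) : ℝ) : ℂ) ^ z
        - 2 * z * (1/4 * ((u * (1 - u) : ℝ) : ℂ) ^ (z - 1) - ((u * (1 - u) : ℝ) : ℂ) ^ z)) * f u
      = betaFn f (z + 1) - 2 * z * (1/4 * betaFn f z - betaFn f (z + 1)) := by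
  have hB := hf.intervalIntegrable_mul_cpow_mul_one_sub (s := z + 1)
    (by simpa using hz.trans (lt_add_one _))
  have hC := hf.intervalIntegrable_mul_cpow_mul_one_sub hz
  simp only [add_sub_cancel_right] at hB
  simp only [betaFn_eq_intervalIntegral, add_sub_cancel_right]
  rw [← intervalIntegral.integral_const_mul, ← intervalIntegral.integral_sub (hC.const_mul _) hB,
    ← intervalIntegral.integral_const_mul, ← intervalIntegral.integral_sub hB]
  · congr 1; ext u; ring
  · exact ((hC.const_mul _).sub hB).const_mul _

/-- For continuously differentiable `f : [0,1] → ℂ` (with derivative `f'`) and `Re z > 0`: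
`β[(·−1/2) f'](z+1) = −β[f](z+1) + 2z((1/4) β[f](z) − β[f](z+1))`. -/
theorem betaFn_deriv_identity
    (f f' : ℝ → ℂ)
    (hderiv : ∀ u ∈ Icc (0:ℝ) 1, HasDerivWithinAt f (f' u) (Icc 0 1) u)
    (hf' : ContinuousOn f' (Icc 0 1))
    (z : ℂ) (hz : 0 < z.re) :
    betaFn (fun u => ((u - 1/2 : ℝ) : ℂ) * f' u) (z + 1)
      = -betaFn f (z + 1) + 2 * z * ((1/4) * betaFn f z - betaFn f (z + 1)) := by
  have hz0 : z ≠ 0 := by rintro rfl; simp at hz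
  have hf : ContinuousOn f (Icc 0 1) := fun u hu => (hderiv u hu).continuousWithinAt
  have hfd : ∀ u ∈ Ioo (0:ℝ) 1, HasDerivAt f (f' u) u := fun u hu =>
    (hderiv u (Ioo_subset_Icc_self hu)).hasDerivAt (Icc_mem_nhds hu.1 hu.2)
  have hweight := continuous_cpow_mul_one_sub hz
  have hg'int := (hweight.intervalIntegrable 0 1).sub
    ((((intervalIntegrable_cpow_mul_one_sub hz).const_mul (1/4)).sub
      (hweight.intervalIntegrable 0 1)).const_mul (2 * z))
  have parts := intervalIntegral.integral_mul_deriv_eq_deriv_mul_of_hasDerivAt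
    (u := fun v : ℝ => ((v - 1/2 : ℝ) : ℂ) * ((v * (1 - v) : ℝ) : ℂ) ^ z) (v := f)
    (by fun_prop) (by rwa [uIcc_of_le zero_le_one])
    (fun u hu => hasDerivAt_sub_half_mul_cpow_mul_one_sub (by simpa using hu) z)
    (fun u hu => hfd u (by simpa using hu)) hg'int (hf'.intervalIntegrable_of_Icc zero_le_one)
  rw [betaFn_eq_intervalIntegral, add_sub_cancel_right]
  calc ∫ u in (0:ℝ)..1, ((u - 1/2 : ℝ) : ℂ) * f' u * ((u * (1 - u) : ℝ) : ℂ) ^ z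
      = ∫ u in (0:ℝ)..1, ((u - 1/2 : ℝ) : ℂ) * ((u * (1 - u) : ℝ) : ℂ) ^ z * f' u := by
        congr 1; ext u; ring
    _ = _ := by
        rw [parts, integral_deriv_sub_half_mul_cpow_mul_one_sub_mul hf hz]
        simp only [sub_self, mul_zero, zero_mul, sub_zero, Complex.ofReal_zero,
          Complex.zero_cpow hz0]
        ring
end

section
/- Let f : [0,1] → ℂ be continuously differentiable. Then z·β[f](z) tends to 2·∫₀¹ f(u) du + 2·∫₀¹ (u−1/2) f′(u) du as z → 0 within the open right half-plane {z ∈ ℂ : Re(z) > 0}. (Equivalently, the meromorphic continuation of β[f] has a simple pole at z = 0 with this residue; by integration by parts the residue equals f(0) + f(1).) -/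
open MeasureTheory Set Filter Topology

/-! Subtracting the linear interpolant `ℓ u = f 0 (1 - u) + f 1 u` leaves a function vanishing at
both endpoints, hence bounded by a multiple of `u (1 - u)`; its Beta transform therefore stays
bounded as `z → 0` and contributes nothing to the limit. The interpolant has Beta transform
`(f 0 + f 1) B(z, z + 1) = (f 0 + f 1) Γ(z) Γ(z + 1) / Γ(2z + 1)`, and `z Γ(z) → 1`, so
`z β[f](z) → f 0 + f 1`. Integration by parts against `u - 1/2` turns `f 0 + f 1` into the stated
limit. -/

lemma ofReal_mul_one_sub_cpow {u : ℝ} (hu : u ∈ Icc (0:ℝ) 1) (s : ℂ) :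
    ((u * (1 - u) : ℝ) : ℂ) ^ s = (u : ℂ) ^ s * (1 - (u : ℂ)) ^ s := by
  simpa using Complex.mul_cpow_ofReal_nonneg hu.1 (sub_nonneg.2 hu.2) s

lemma Complex.betaIntegral_eq_setIntegral (a b : ℂ) :
    betaIntegral a b = ∫ u in Ioo (0:ℝ) 1, (u : ℂ) ^ (a - 1) * (1 - (u : ℂ)) ^ (b - 1) := by
  rw [betaIntegral, intervalIntegral.integral_of_le zero_le_one, integral_Ioc_eq_integral_Ioo]

lemma integrableOn_betaFn_integrand {g : ℝ → ℂ} (hg : ContinuousOn g (Icc 0 1)) {z : ℂ}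
    (hz : 0 < z.re) :
    IntegrableOn (fun u : ℝ => g u * ((u * (1 - u) : ℝ) : ℂ) ^ (z - 1)) (Ioo 0 1) := by
  have hkernel : IntegrableOn (fun u : ℝ => ((u * (1 - u) : ℝ) : ℂ) ^ (z - 1)) (Ioo 0 1) :=
    ((Complex.betaIntegral_convergent hz hz).1.mono_set Ioo_subset_Ioc_self).congr_fun
      (fun u hu => (ofReal_mul_one_sub_cpow (Ioo_subset_Icc_self hu) _).symm) measurableSet_Ioo
  exact hkernel.continuousOn_mul_of_subset hg isCompact_Icc measurableSet_Ioo Ioo_subset_Icc_self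

lemma betaFn_add {f g : ℝ → ℂ} (hf : ContinuousOn f (Icc 0 1)) (hg : ContinuousOn g (Icc 0 1))
    {z : ℂ} (hz : 0 < z.re) :
    betaFn (fun u => f u + g u) z = betaFn f z + betaFn g z := by
  simp only [betaFn, add_mul]
  exact integral_add (integrableOn_betaFn_integrand hf hz)
    (integrableOn_betaFn_integrand hg hz)

lemma betaFn_const_mul (c : ℂ) (f : ℝ → ℂ) (z : ℂ) :
    betaFn (fun u => c * f u) z = c * betaFn f z := by
  simp only [betaFn, mul_assoc, integral_const_mul]

lemma betaFn_ofReal (z : ℂ) : betaFn (fun u => (u : ℂ)) z = Complex.betaIntegral (z + 1) z := by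
  rw [betaFn, Complex.betaIntegral_eq_setIntegral]
  refine setIntegral_congr_fun measurableSet_Ioo fun u hu => ?_
  have hu0 : (u : ℂ) ≠ 0 := Complex.ofReal_ne_zero.2 hu.1.ne'
  rw [ofReal_mul_one_sub_cpow (Ioo_subset_Icc_self hu), add_sub_cancel_right,
    show z = (z - 1) + 1 by ring, Complex.cpow_add _ _ hu0, Complex.cpow_one, add_sub_cancel_right]
  ring

lemma betaFn_one_sub (z : ℂ) :
    betaFn (fun u => 1 - (u : ℂ)) z = Complex.betaIntegral z (z + 1) := by
  rw [betaFn, Complex.betaIntegral_eq_setIntegral]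
  refine setIntegral_congr_fun measurableSet_Ioo fun u hu => ?_
  have hu1 : 1 - (u : ℂ) ≠ 0 := by
    rw [← Complex.ofReal_one, ← Complex.ofReal_sub]
    exact Complex.ofReal_ne_zero.2 (sub_pos.2 hu.2).ne'
  rw [ofReal_mul_one_sub_cpow (Ioo_subset_Icc_self hu), add_sub_cancel_right,
    show z = (z - 1) + 1 by ring, Complex.cpow_add _ _ hu1, Complex.cpow_one, add_sub_cancel_right]
  ring

lemma betaFn_affine (a b : ℂ) {z : ℂ} (hz : 0 < z.re) :
    betaFn (fun u => a * (1 - (u : ℂ)) + b * u) z = (a + b) * Complex.betaIntegral z (z + 1) := by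
  rw [betaFn_add (by fun_prop) (by fun_prop) hz, betaFn_const_mul, betaFn_const_mul,
    betaFn_one_sub, betaFn_ofReal, Complex.betaIntegral_symm]
  ring

lemma tendsto_mul_betaIntegral_self_add_one :
    Tendsto (fun z => z * Complex.betaIntegral z (z + 1)) (𝓝[{z | 0 < z.re}] 0) (𝓝 1) := by
  have hGamma_ratio : Tendsto (fun z => Complex.Gamma (z + 1) / Complex.Gamma (z + (z + 1)))
      (𝓝 0) (𝓝 1) := by
    have hcont : ContinuousAt (fun z => Complex.Gamma (z + 1) / Complex.Gamma (z + (z + 1))) 0 :=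
      ((Complex.continuousAt_Gamma_one.comp_of_eq (by fun_prop) (by simp)).div
        (Complex.continuousAt_Gamma_one.comp_of_eq (by fun_prop) (by simp)) (by simp))
    simpa using hcont.tendsto
  have hpole : 𝓝[{z : ℂ | 0 < z.re}] 0 ≤ 𝓝[≠] 0 :=
    nhdsWithin_mono _ fun z (hz : 0 < z.re) (h : z = 0) => by simp [h] at hz
  have hlim := (Complex.tendsto_self_mul_Gamma_nhds_zero.mono_left hpole).mul
    (hGamma_ratio.mono_left nhdsWithin_le_nhds)
  rw [mul_one] at hlim
  refine hlim.congr' ?_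
  filter_upwards [self_mem_nhdsWithin] with z hz
  rw [Complex.betaIntegral_eq_Gamma_mul_div _ _ hz (by simp; linarith)]
  ring

lemma norm_le_two_mul_mul_one_sub {E : Type*} [NormedAddCommGroup E] [NormedSpace ℝ E]
    {r r' : ℝ → E} {M : ℝ} (hr : ∀ u ∈ Icc (0:ℝ) 1, HasDerivWithinAt r (r' u) (Icc 0 1) u)
    (hM : ∀ u ∈ Icc (0:ℝ) 1, ‖r' u‖ ≤ M) (h0 : r 0 = 0) (h1 : r 1 = 0) {u : ℝ}
    (hu : u ∈ Icc (0:ℝ) 1) :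
    ‖r u‖ ≤ 2 * M * (u * (1 - u)) := by
  have hleft : ‖r u‖ ≤ M * u := by
    simpa [h0, abs_of_nonneg hu.1] using
      (convex_Icc (0:ℝ) 1).norm_image_sub_le_of_norm_hasDerivWithin_le hr hM
        (left_mem_Icc.2 zero_le_one) hu
  have hright : ‖r u‖ ≤ M * (1 - u) := by
    simpa [h1, abs_of_nonpos (sub_nonpos.2 hu.2)] using
      (convex_Icc (0:ℝ) 1).norm_image_sub_le_of_norm_hasDerivWithin_le hr hM
        (right_mem_Icc.2 zero_le_one) hu
  rcases le_total u (1 / 2) with h | h <;> nlinarith [norm_nonneg (r u), hu.1, hu.2]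

lemma norm_betaFn_le {r : ℝ → ℂ} {C : ℝ} (hr : ∀ u ∈ Ioo (0:ℝ) 1, ‖r u‖ ≤ C * (u * (1 - u)))
    {z : ℂ} (hz : 0 ≤ z.re) :
    ‖betaFn r z‖ ≤ C := by
  have hC : 0 ≤ C := by nlinarith [hr (1 / 2) ⟨by norm_num, by norm_num⟩, norm_nonneg (r (1 / 2))]
  have hbound : ∀ u ∈ Ioo (0:ℝ) 1, ‖r u * ((u * (1 - u) : ℝ) : ℂ) ^ (z - 1)‖ ≤ C := by
    intro u hu
    have hpos : 0 < u * (1 - u) := mul_pos hu.1 (sub_pos.2 hu.2)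
    rw [norm_mul, Complex.norm_cpow_eq_rpow_re_of_pos hpos, Complex.sub_re, Complex.one_re]
    calc ‖r u‖ * (u * (1 - u)) ^ (z.re - 1)
        ≤ C * (u * (1 - u)) * (u * (1 - u)) ^ (z.re - 1) := by gcongr; exact hr u hu
      _ = C * (u * (1 - u)) ^ z.re := by
        conv_rhs => rw [← add_sub_cancel 1 z.re]
        rw [Real.rpow_add hpos, Real.rpow_one, mul_assoc]
      _ ≤ C := mul_le_of_le_one_right hC
        (Real.rpow_le_one hpos.le (by nlinarith [hu.1, hu.2]) hz)
  simpa [betaFn] using norm_setIntegral_le_of_norm_le_const (μ := volume) measure_Ioo_lt_top hbound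

lemma tendsto_mul_betaFn_of_norm_le {r : ℝ → ℂ} {C : ℝ}
    (hr : ∀ u ∈ Ioo (0:ℝ) 1, ‖r u‖ ≤ C * (u * (1 - u))) :
    Tendsto (fun z => z * betaFn r z) (𝓝[{z | 0 ≤ z.re}] 0) (𝓝 0) := by
  refine squeeze_zero_norm' (a := fun z => ‖z‖ * C) ?_ ?_
  · filter_upwards [self_mem_nhdsWithin] with z hz
    rw [norm_mul]
    exact mul_le_mul_of_nonneg_left (norm_betaFn_le hr hz) (norm_nonneg z)
  · simpa using (tendsto_norm_zero.mono_left nhdsWithin_le_nhds).mul_const C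

theorem tendsto_mul_betaFn {f f' : ℝ → ℂ} {M : ℝ}
    (hderiv : ∀ u ∈ Icc (0:ℝ) 1, HasDerivWithinAt f (f' u) (Icc 0 1) u)
    (hM : ∀ u ∈ Icc (0:ℝ) 1, ‖f' u‖ ≤ M) :
    Tendsto (fun z => z * betaFn f z) (𝓝[{z | 0 < z.re}] 0) (𝓝 (f 0 + f 1)) := by
  set ℓ : ℝ → ℂ := fun u => f 0 * (1 - (u : ℂ)) + f 1 * u
  have hr : ∀ u ∈ Icc (0:ℝ) 1,
      HasDerivWithinAt (fun u => f u - ℓ u) (f' u - (f 1 - f 0)) (Icc 0 1) u := by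
    intro u hu
    have hℓ : HasDerivAt ℓ (f 1 - f 0) u :=
      ((((hasDerivAt_id u).ofReal_comp.const_sub 1).const_mul (f 0)).add
        ((hasDerivAt_id u).ofReal_comp.const_mul (f 1))).congr_deriv (by simp; ring)
    exact (hderiv u hu).sub hℓ.hasDerivWithinAt
  have hr' : ∀ u ∈ Icc (0:ℝ) 1, ‖f' u - (f 1 - f 0)‖ ≤ M + ‖f 1 - f 0‖ :=
    fun u hu => (norm_sub_le _ _).trans (by gcongr; exact hM u hu)
  have hremainder := tendsto_mul_betaFn_of_norm_le fun u hu =>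
    norm_le_two_mul_mul_one_sub hr hr' (by simp [ℓ]) (by simp [ℓ]) (Ioo_subset_Icc_self hu)
  have hlim := (tendsto_mul_betaIntegral_self_add_one.const_mul (f 0 + f 1)).add
    (hremainder.mono_left (nhdsWithin_mono _ fun z (hz : 0 < z.re) => hz.le))
  rw [mul_one, add_zero] at hlim
  refine hlim.congr' ?_
  have hℓc : ContinuousOn ℓ (Icc 0 1) := by fun_prop
  filter_upwards [self_mem_nhdsWithin] with z hz
  have hsplit : betaFn f z = betaFn ℓ z + betaFn (fun u => f u - ℓ u) z := by
    rw [← betaFn_add hℓc (fun u hu => (hr u hu).continuousWithinAt) hz]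
    simp only [add_sub_cancel]
  have haffine : betaFn ℓ z = (f 0 + f 1) * Complex.betaIntegral z (z + 1) :=
    betaFn_affine (f 0) (f 1) hz
  rw [hsplit, haffine, mul_add, mul_left_comm]

lemma integral_add_integral_mul_deriv {f f' : ℝ → ℂ}
    (hderiv : ∀ u ∈ Icc (0:ℝ) 1, HasDerivWithinAt f (f' u) (Icc 0 1) u)
    (hf' : IntervalIntegrable f' volume 0 1) :
    (∫ u in Ioo (0:ℝ) 1, f u) + ∫ u in Ioo (0:ℝ) 1, ((u - 1/2 : ℝ) : ℂ) * f' u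
      = (f 0 + f 1) / 2 := by
  have hcoef : ∀ u ∈ uIcc (0:ℝ) 1,
      HasDerivWithinAt (fun u : ℝ => ((u - 1/2 : ℝ) : ℂ)) 1 (uIcc 0 1) u :=
    fun u _ => ((hasDerivAt_id u).sub_const (1/2)).ofReal_comp.hasDerivWithinAt
  have hparts := intervalIntegral.integral_mul_deriv_eq_deriv_mul_of_hasDerivWithinAt hcoef
    (by rwa [uIcc_of_le zero_le_one]) intervalIntegrable_const hf'
  simp only [intervalIntegral.integral_of_le zero_le_one, integral_Ioc_eq_integral_Ioo,
    one_mul] at hparts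
  rw [hparts]
  push_cast
  ring

/-- For continuously differentiable `f : [0,1] → ℂ` (with derivative `f'`),
`z β[f](z) → 2∫₀¹ f + 2∫₀¹ (u−1/2) f'(u) du` as `z → 0` in the right half-plane. -/
theorem betaFn_residue_at_zero
    (f f' : ℝ → ℂ)
    (hderiv : ∀ u ∈ Icc (0:ℝ) 1, HasDerivWithinAt f (f' u) (Icc 0 1) u)
    (hf' : ContinuousOn f' (Icc 0 1)) :
    Tendsto (fun z : ℂ => z * betaFn f z) (𝓝[{z : ℂ | 0 < z.re}] 0)
      (𝓝 (2 * (∫ u in Ioo (0:ℝ) 1, f u)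
          + 2 * ∫ u in Ioo (0:ℝ) 1, ((u - 1/2 : ℝ) : ℂ) * f' u)) := by
  obtain ⟨M, hM⟩ := isCompact_Icc.exists_bound_of_continuousOn hf'
  rw [← mul_add,
    integral_add_integral_mul_deriv hderiv (hf'.intervalIntegrable_of_Icc zero_le_one),
    mul_div_cancel₀ _ two_ne_zero]
  exact tendsto_mul_betaFn hderiv hM
end

section
/- For every natural number n, the function z ↦ (z + n)·Γ(z)²/Γ(2z) tends to 2·C(2n, n) as z → −n within the punctured neighborhood (i.e., along z ≠ −n), where Γ is the complex Gamma function and C(2n, n) is the binomial coefficient. In other words, the diagonal Beta function B(z,z) = Γ(z)²/Γ(2z) has a simple pole at each negative integer −n with limit of (z+n)B(z,z) equal to 2·C(2n,n). -/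
/-! Γ has a simple pole at `-m` with residue `(-1)^m / m!`, by induction from the pole at `0`
through `Γ(z) = Γ(z + 1) / z`. Since `2z = -2n` exactly when `z = -n`, the function `Γ(2z)` has a
simple pole at `-n` with residue `1 / (2 (2n)!)`; the sign `(-1)^(2n)` is `1`. Writing
`(z + n) Γ(z)² / Γ(2z) = ((z + n) Γ(z))² / ((z + n) Γ(2z))`, the limit is
`(1 / n!)² · 2 (2n)! = 2 C(2n, n)`. -/

open Filter Topology Complex Nat

theorem tendsto_add_nat_mul_Gamma_nhdsNE_neg_nat (m : ℕ) :
    Tendsto (fun z : ℂ => (z + m) * Gamma z) (𝓝[≠] (-m)) (𝓝 ((-1) ^ m / m !)) := by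
  induction m with
  | zero => simpa using tendsto_self_mul_Gamma_nhds_zero
  | succ m ih =>
    have hshift : Tendsto (· + 1) (𝓝[≠] (-(m + 1 : ℕ) : ℂ)) (𝓝[≠] (-m : ℂ)) := by
      have h := (Filter.map_add_right_nhdsNE (c := (1 : ℂ)) (a := (-(m + 1 : ℕ) : ℂ))).le
      rwa [show (-(m + 1 : ℕ) + 1 : ℂ) = -m by push_cast; ring] at h
    have hpole : (-(m + 1 : ℕ) : ℂ) ≠ 0 :=
      neg_ne_zero.mpr (Nat.cast_ne_zero.mpr m.succ_ne_zero)
    have hrec : (fun z : ℂ => (z + 1 + m) * Gamma (z + 1) * z⁻¹)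
        =ᶠ[𝓝[≠] (-(m + 1 : ℕ) : ℂ)] fun z => (z + (m + 1 : ℕ)) * Gamma z := by
      filter_upwards [nhdsWithin_le_nhds (eventually_ne_nhds hpole)] with z hz
      rw [Gamma_add_one z hz]
      field_simp
      push_cast; ring
    have hlim : (-1) ^ m / m ! * (-(m + 1 : ℕ) : ℂ)⁻¹ = (-1) ^ (m + 1) / (m + 1)! := by
      rw [Nat.factorial_succ]
      push_cast
      field_simp
      ring
    rw [← hlim]
    exact ((ih.comp hshift).mul
      ((tendsto_inv₀ hpole).mono_left nhdsWithin_le_nhds)).congr' hrec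

theorem tendsto_add_nat_mul_Gamma_two_mul_nhdsNE_neg_nat (n : ℕ) :
    Tendsto (fun z : ℂ => (z + n) * Gamma (2 * z)) (𝓝[≠] (-n))
      (𝓝 (2 * (2 * n)! : ℂ)⁻¹) := by
  have hdouble : Tendsto (2 * ·) (𝓝[≠] (-n : ℂ)) (𝓝[≠] (-(2 * n : ℕ) : ℂ)) := by
    have h : map (2 * ·) (𝓝[≠] (-n : ℂ)) = 𝓝[≠] (2 * -n : ℂ) :=
      (Homeomorph.mulLeft₀ (2 : ℂ) two_ne_zero).map_punctured_nhds_eq (-n)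
    rw [mul_neg, show (2 * n : ℂ) = (2 * n : ℕ) by norm_cast] at h
    exact h.le
  have h :=
    ((tendsto_add_nat_mul_Gamma_nhdsNE_neg_nat (2 * n)).comp hdouble).const_mul (2⁻¹ : ℂ)
  rw [(even_two_mul n).neg_one_pow] at h
  convert h using 1
  · ext z; simp only [Function.comp_apply]; push_cast; ring
  · rw [one_div, mul_inv]

theorem inv_factorial_sq_div_eq_two_mul_choose {K : Type*} [Field K] [CharZero K] (n : ℕ) :
    ((n ! : K) ^ 2)⁻¹ / (2 * (2 * n)! : K)⁻¹ = 2 * (2 * n).choose n := by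
  rw [Nat.cast_choose K (by omega : n ≤ 2 * n), show 2 * n - n = n by omega]
  field_simp

/-- The diagonal Beta function `B(z,z) = Γ(z)²/Γ(2z)` has a simple pole at each `−n`, `n ∈ ℕ`,
with `(z+n) B(z,z) → 2 C(2n,n)` as `z → −n`, `z ≠ −n`. -/
theorem diagonal_beta_pole_at_neg_nat (n : ℕ) :
    Tendsto (fun z : ℂ => (z + (n:ℂ)) * (Complex.Gamma z) ^ 2 / Complex.Gamma (2 * z))
      (𝓝[≠] (-(n:ℂ))) (𝓝 (2 * (Nat.choose (2 * n) n : ℂ))) := by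
  have hsq := (tendsto_add_nat_mul_Gamma_nhdsNE_neg_nat n).pow 2
  rw [div_pow, ← pow_mul, mul_comm n, pow_mul, neg_one_sq, one_pow, one_div] at hsq
  have h := hsq.div (tendsto_add_nat_mul_Gamma_two_mul_nhdsNE_neg_nat n)
    (by simp [Nat.factorial_ne_zero])
  rw [inv_factorial_sq_div_eq_two_mul_choose] at h
  refine h.congr' ?_
  filter_upwards [self_mem_nhdsWithin] with z hz
  have hz' : z + n ≠ 0 := fun h => hz (eq_neg_of_add_eq_zero_left h)
  simp only [Pi.div_apply]
  field_simp
end
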